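/- arXiv:1812.03739 — 3 statements merged into one kernel-verified Lean document; each statement's English description precedes it below -/
import Mathlib

section
/- Let A ∈ ℝ^{m×n} have columns of unit ℓ2-norm and mutual coherence μ, let k ≥ 2 be an integer with μ < 1/(2k−1), let b = Ax + z with ‖z‖₂ ≤ ε, let λ > 0, and let x^♯ be a minimizer of u ↦ ‖u‖₁ + (1/(2λ))‖b − Au‖₂². Then ‖A(x^♯ − x)‖₂ ≤ (2λ/(√k·α₁·λ + ε))·‖x − x_[k]‖₁ + 2(√k·α₁·λ + ε), where α₁ = √(1+(k−1)μ)/(1−(k−1)μ). -/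
noncomputable def l2norm {ι : Type*} [Fintype ι] (v : ι → ℝ) : ℝ :=
  Real.sqrt (∑ i, (v i) ^ 2)

noncomputable def l1norm {ι : Type*} [Fintype ι] (v : ι → ℝ) : ℝ :=
  ∑ i, |v i|

noncomputable def linfnorm {ι : Type*} [Fintype ι] (v : ι → ℝ) : ℝ :=
  ⨆ i, |v i|

/-- The mutual coherence of a matrix: the largest absolute inner product
between two distinct columns. -/
noncomputable def mutualCoherence {m n : ℕ} (A : Matrix (Fin m) (Fin n) ℝ) : ℝ :=
  ⨆ p : {p : Fin n × Fin n // p.1 ≠ p.2}, |∑ r, A r p.1.1 * A r p.1.2|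

/-- `restrict v E` agrees with `v` on `E` and vanishes outside of `E`. -/
def restrict {n : ℕ} (v : Fin n → ℝ) (E : Finset (Fin n)) : Fin n → ℝ :=
  fun i => if i ∈ E then v i else 0

/-- A vector is `k`-sparse if it has at most `k` nonzero entries. -/
def sparse {n : ℕ} (k : ℕ) (v : Fin n → ℝ) : Prop :=
  (Finset.univ.filter fun i => v i ≠ 0).card ≤ k

noncomputable def alpha1 (k : ℕ) (μ : ℝ) : ℝ :=
  Real.sqrt (1 + ((k : ℝ) - 1) * μ) / (1 - ((k : ℝ) - 1) * μ)

noncomputable def alpha2 (k : ℕ) (μ : ℝ) : ℝ :=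
  Real.sqrt k * μ / (1 - ((k : ℝ) - 1) * μ)

noncomputable def fk (k : ℕ) (t : ℝ) : ℝ :=
  (k : ℝ) * t ^ 2 + 3 * Real.sqrt k * t + 3

noncomputable def gk (k : ℕ) (t : ℝ) : ℝ :=
  2 * (k : ℝ) * t ^ 2 + 4 * Real.sqrt k * t + 1

/-!
Write `h = x♯ - x` and let `T` be the support of `x_[k]`. Comparing the objective at `x♯` and at
`x` gives `‖Ah‖₂² ≤ 2λ (‖h_T‖₁ - ‖h_{Tᶜ}‖₁ + 2‖x - x_[k]‖₁) + 2ε ‖Ah‖₂`. Small coherence makes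
the Gram matrix `AᵀA` close to the identity, so `A` is nearly isometric on vectors supported on `T`
and nearly orthogonal across disjoint supports; this yields
`‖h_T‖₂ ≤ α₁ ‖Ah‖₂ + α₂ ‖h_{Tᶜ}‖₁`, and as `√k α₂ ≤ 1` exactly when `μ ≤ 1/(2k-1)`, also
`‖h_T‖₁ - ‖h_{Tᶜ}‖₁ ≤ √k α₁ ‖Ah‖₂`. Hence `N = ‖Ah‖₂` satisfies `N² ≤ 2cN + 4λ‖x - x_[k]‖₁`
with `c = √k α₁ λ + ε`, and solving this quadratic inequality gives the bound.
-/

open Finset hiding restrict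
open Matrix

section Norms

variable {ι : Type*} [Fintype ι]

lemma l2norm_nonneg (v : ι → ℝ) : 0 ≤ l2norm v :=
  Real.sqrt_nonneg _

lemma l1norm_nonneg (v : ι → ℝ) : 0 ≤ l1norm v :=
  sum_nonneg fun _ _ => abs_nonneg _

lemma sq_l2norm (v : ι → ℝ) : l2norm v ^ 2 = v ⬝ᵥ v := by
  rw [l2norm, Real.sq_sqrt (sum_nonneg fun _ _ => sq_nonneg _)]
  simp only [dotProduct, sq]

lemma dotProduct_le_l2norm_mul (u v : ι → ℝ) : u ⬝ᵥ v ≤ l2norm u * l2norm v :=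
  Real.sum_mul_le_sqrt_mul_sqrt _ _ _

lemma sq_l2norm_sub (u v : ι → ℝ) :
    l2norm (u - v) ^ 2 = l2norm u ^ 2 - 2 * (u ⬝ᵥ v) + l2norm v ^ 2 := by
  simp only [sq_l2norm, sub_dotProduct, dotProduct_sub, dotProduct_comm v u]
  ring

lemma l1norm_le_sqrt_card_mul_l2norm (v : ι → ℝ) (s : Finset ι) (hv : ∀ i ∉ s, v i = 0) :
    l1norm v ≤ √(#s : ℝ) * l2norm v := by
  have hsum : ∀ f : ι → ℝ, (∀ i ∉ s, f i = 0) → ∑ i, f i = ∑ i ∈ s, f i := fun f hf =>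
    (sum_subset (subset_univ s) fun i _ hi => hf i hi).symm
  rw [l1norm, l2norm, hsum _ fun i hi => by simp [hv i hi],
    hsum _ fun i hi => by simp [hv i hi], ← Real.sqrt_mul (Nat.cast_nonneg _)]
  refine Real.le_sqrt_of_sq_le ?_
  simpa [sq_abs] using sum_mul_sq_le_sq_mul_sq s (fun _ => (1 : ℝ)) fun i => |v i|

end Norms

section Restrict

variable {n : ℕ}

lemma restrict_add_restrict_compl (v : Fin n → ℝ) (E : Finset (Fin n)) :
    restrict v E + restrict v Eᶜ = v := by
  ext i
  by_cases hi : i ∈ E <;> simp [restrict, hi]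

lemma restrict_mul_restrict_compl (v : Fin n → ℝ) (E : Finset (Fin n)) (i : Fin n) :
    restrict v E i * restrict v Eᶜ i = 0 := by
  by_cases hi : i ∈ E <;> simp [restrict, hi]

lemma restrict_eq_zero_of_notMem {v : Fin n → ℝ} {E : Finset (Fin n)} {i : Fin n} (hi : i ∉ E) :
    restrict v E i = 0 :=
  if_neg hi

lemma l1norm_restrict_le_sqrt_mul_l2norm (v : Fin n → ℝ) {E : Finset (Fin n)} {k : ℕ}
    (hE : #E ≤ k) : l1norm (restrict v E) ≤ √k * l2norm (restrict v E) :=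
  (l1norm_le_sqrt_card_mul_l2norm _ E fun _ hi => restrict_eq_zero_of_notMem hi).trans
    (by gcongr; exact l2norm_nonneg _)

end Restrict

lemma le_add_two_mul_of_sq_le {N c t : ℝ} (hc : 0 < c) (ht : 0 ≤ t)
    (h : N ^ 2 ≤ 2 * c * N + 2 * c * t) : N ≤ t + 2 * c := by
  nlinarith [sq_nonneg (N - c - (c + t))]

section Gram

variable {ι κ : Type*} [Fintype ι] [Fintype κ] {μ : ℝ}

lemma abs_dotProduct_mulVec_sub_diag_le (G : Matrix ι ι ℝ) (hG : ∀ i j, i ≠ j → |G i j| ≤ μ)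
    (u w : ι → ℝ) :
    |u ⬝ᵥ G *ᵥ w - ∑ i, u i * G i i * w i| ≤
      μ * (l1norm u * l1norm w - ∑ i, |u i| * |w i|) := by
  classical
  have hrow : ∀ i, u i * (G *ᵥ w) i - u i * G i i * w i =
      ∑ j ∈ univ.erase i, u i * G i j * w j := fun i => by
    rw [mulVec, dotProduct, mul_sum, ← add_sum_erase _ _ (mem_univ i)]
    simp only [mul_assoc, add_sub_cancel_left]
  rw [dotProduct, ← sum_sub_distrib, sum_congr rfl fun i _ => hrow i]
  calc |∑ i, ∑ j ∈ univ.erase i, u i * G i j * w j|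
      ≤ ∑ i, ∑ j ∈ univ.erase i, |u i| * μ * |w j| := by
        refine (abs_sum_le_sum_abs _ _).trans (sum_le_sum fun i _ => ?_)
        refine (abs_sum_le_sum_abs _ _).trans (sum_le_sum fun j hj => ?_)
        rw [abs_mul, abs_mul]
        gcongr
        exact hG i j (ne_of_mem_erase hj).symm
    _ = μ * (l1norm u * l1norm w - ∑ i, |u i| * |w i|) := by
        simp only [← mul_sum, sum_erase_eq_sub (mem_univ _), l1norm, sum_mul, ← sum_sub_distrib]
        rw [mul_sum]
        exact sum_congr rfl fun i _ => by ring

lemma dotProduct_mulVec_mulVec (A : Matrix κ ι ℝ) (u w : ι → ℝ) :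
    (A *ᵥ u) ⬝ᵥ (A *ᵥ w) = u ⬝ᵥ (Aᵀ * A) *ᵥ w := by
  rw [← vecMul_transpose, ← dotProduct_mulVec, mulVec_mulVec]

variable (A : Matrix κ ι ℝ) (hG : ∀ i j, i ≠ j → |(Aᵀ * A) i j| ≤ μ)
include hG

lemma abs_dotProduct_mulVec_le_of_disjoint {u w : ι → ℝ} (huw : ∀ i, u i * w i = 0) :
    |(A *ᵥ u) ⬝ᵥ (A *ᵥ w)| ≤ μ * l1norm u * l1norm w := by
  have h := abs_dotProduct_mulVec_sub_diag_le _ hG u w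
  simp only [mul_right_comm (u _) _ (w _), huw, zero_mul, sum_const_zero, ← abs_mul,
    abs_zero, sub_zero] at h
  rwa [dotProduct_mulVec_mulVec, mul_assoc]

lemma abs_sq_l2norm_mulVec_sub_le (hdiag : ∀ i, (Aᵀ * A) i i = 1) (hμ : 0 ≤ μ)
    {v : ι → ℝ} {k : ℝ} (hv : l1norm v ^ 2 ≤ k * l2norm v ^ 2) :
    |l2norm (A *ᵥ v) ^ 2 - l2norm v ^ 2| ≤ (k - 1) * μ * l2norm v ^ 2 := by
  have h := abs_dotProduct_mulVec_sub_diag_le _ hG v v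
  simp only [hdiag, mul_one, ← abs_mul, abs_mul_self] at h
  calc _ ≤ μ * (l1norm v ^ 2 - l2norm v ^ 2) := by
        rw [sq_l2norm, sq_l2norm, dotProduct_mulVec_mulVec, sq]
        exact h
    _ ≤ μ * (k * l2norm v ^ 2 - l2norm v ^ 2) := by gcongr
    _ = (k - 1) * μ * l2norm v ^ 2 := by ring

lemma sq_l2norm_mulVec_le_of_disjoint {u w : ι → ℝ} (huw : ∀ i, u i * w i = 0) :
    l2norm (A *ᵥ u) ^ 2 ≤ l2norm (A *ᵥ u) * l2norm (A *ᵥ (u + w)) + μ * l1norm u * l1norm w := by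
  have hsplit : l2norm (A *ᵥ u) ^ 2 = (A *ᵥ u) ⬝ᵥ (A *ᵥ (u + w)) - (A *ᵥ u) ⬝ᵥ (A *ᵥ w) := by
    rw [sq_l2norm, mulVec_add, dotProduct_add, add_sub_cancel_right]
  rw [hsplit]
  linarith [dotProduct_le_l2norm_mul (A *ᵥ u) (A *ᵥ (u + w)),
    neg_abs_le ((A *ᵥ u) ⬝ᵥ (A *ᵥ w)), abs_dotProduct_mulVec_le_of_disjoint A hG huw]

end Gram

lemma mul_lt_one_of_lt_one_div {a μ : ℝ} (hμ : 0 ≤ μ) (h : μ < 1 / a) : a * μ < 1 := by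
  have ha : 0 < a := by
    by_contra! ha
    linarith [one_div_nonpos.mpr ha]
  rwa [lt_div_iff₀ ha, mul_comm] at h

lemma sqrt_mul_alpha2_le_one {k : ℕ} {μ : ℝ} (hμ : 0 ≤ μ) (hkμ : (2 * (k : ℝ) - 1) * μ < 1) :
    √k * alpha2 k μ ≤ 1 := by
  have hD : 0 < 1 - ((k : ℝ) - 1) * μ := by nlinarith
  rw [alpha2, ← mul_div_assoc, div_le_one hD, ← mul_assoc, Real.mul_self_sqrt (Nat.cast_nonneg k)]
  linarith

lemma alpha1_pos {k : ℕ} {μ : ℝ} (hk : 1 ≤ k) (hμ : 0 ≤ μ) (hkμ : (2 * (k : ℝ) - 1) * μ < 1) :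
    0 < alpha1 k μ := by
  have hk' : (1 : ℝ) ≤ k := by exact_mod_cast hk
  exact div_pos (Real.sqrt_pos.mpr (by nlinarith)) (by nlinarith)

section Coherence

variable {κ : Type*} [Fintype κ] {n : ℕ} {μ : ℝ}

lemma l2norm_restrict_le (A : Matrix κ (Fin n) ℝ) (hG : ∀ i j, i ≠ j → |(Aᵀ * A) i j| ≤ μ)
    (hdiag : ∀ i, (Aᵀ * A) i i = 1) (hμ : 0 ≤ μ) {k : ℕ} (hkμ : ((k : ℝ) - 1) * μ < 1)
    (h : Fin n → ℝ) {T : Finset (Fin n)} (hT : #T ≤ k) :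
    l2norm (restrict h T) ≤
      alpha1 k μ * l2norm (A *ᵥ h) + alpha2 k μ * l1norm (restrict h Tᶜ) := by
  set v := restrict h T
  set w := restrict h Tᶜ
  set ρ := l2norm v
  set N := l2norm (A *ᵥ h)
  have hρ : 0 ≤ ρ := l2norm_nonneg v
  have hN : 0 ≤ N := l2norm_nonneg _
  have hw : 0 ≤ l1norm w := l1norm_nonneg w
  have hl1 : l1norm v ≤ √k * ρ := l1norm_restrict_le_sqrt_mul_l2norm h hT
  have hv : l1norm v ^ 2 ≤ k * ρ ^ 2 := by
    calc l1norm v ^ 2 ≤ (√k * ρ) ^ 2 := by gcongr; exact l1norm_nonneg v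
      _ = k * ρ ^ 2 := by rw [mul_pow, Real.sq_sqrt (Nat.cast_nonneg k)]
  obtain ⟨hlower, hupper⟩ := abs_le.mp (abs_sq_l2norm_mulVec_sub_le A hG hdiag hμ hv)
  have hAv : l2norm (A *ᵥ v) ≤ √(1 + ((k : ℝ) - 1) * μ) * ρ := by
    rw [← Real.sqrt_sq hρ, ← Real.sqrt_mul' _ (sq_nonneg ρ), ← Real.sqrt_sq (l2norm_nonneg _)]
    exact Real.sqrt_le_sqrt (by linarith)
  have hcross := sq_l2norm_mulVec_le_of_disjoint A hG (restrict_mul_restrict_compl h T)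
  rw [restrict_add_restrict_compl] at hcross
  have hD : 0 < 1 - ((k : ℝ) - 1) * μ := by linarith
  have hkey :
      (1 - ((k : ℝ) - 1) * μ) * ρ ≤ √(1 + ((k : ℝ) - 1) * μ) * N + √k * μ * l1norm w := by
    rcases hρ.eq_or_lt with hρ0 | hρpos
    · rw [← hρ0, mul_zero]; positivity
    refine le_of_mul_le_mul_left ?_ hρpos
    calc ρ * ((1 - ((k : ℝ) - 1) * μ) * ρ) ≤ l2norm (A *ᵥ v) ^ 2 := by nlinarith
      _ ≤ l2norm (A *ᵥ v) * N + μ * l1norm v * l1norm w := hcross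
      _ ≤ √(1 + ((k : ℝ) - 1) * μ) * ρ * N + μ * (√k * ρ) * l1norm w := by gcongr
      _ = ρ * (√(1 + ((k : ℝ) - 1) * μ) * N + √k * μ * l1norm w) := by ring
  rw [alpha1, alpha2, div_mul_eq_mul_div, div_mul_eq_mul_div, ← add_div, le_div_iff₀ hD]
  linarith

lemma l1norm_restrict_le_of_coherence
    (A : Matrix κ (Fin n) ℝ) (hG : ∀ i j, i ≠ j → |(Aᵀ * A) i j| ≤ μ)
    (hdiag : ∀ i, (Aᵀ * A) i i = 1) (hμ : 0 ≤ μ) {k : ℕ} (hkμ : (2 * (k : ℝ) - 1) * μ < 1)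
    (h : Fin n → ℝ) {T : Finset (Fin n)} (hT : #T ≤ k) :
    l1norm (restrict h T) ≤ √k * alpha1 k μ * l2norm (A *ᵥ h) + l1norm (restrict h Tᶜ) :=
  calc _ ≤ √k * (alpha1 k μ * l2norm (A *ᵥ h) + alpha2 k μ * l1norm (restrict h Tᶜ)) :=
        (l1norm_restrict_le_sqrt_mul_l2norm h hT).trans
          (by gcongr; exact l2norm_restrict_le A hG hdiag hμ (by nlinarith) h hT)
    _ = √k * alpha1 k μ * l2norm (A *ᵥ h) + √k * alpha2 k μ * l1norm (restrict h Tᶜ) := by ring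
    _ ≤ _ := by
      gcongr
      exact mul_le_of_le_one_left (l1norm_nonneg _) (sqrt_mul_alpha2_le_one hμ hkμ)

end Coherence

section MutualCoherence

variable {m n : ℕ} (A : Matrix (Fin m) (Fin n) ℝ)

lemma mutualCoherence_nonneg : 0 ≤ mutualCoherence A :=
  Real.iSup_nonneg fun _ => abs_nonneg _

lemma abs_gram_le_mutualCoherence {i j : Fin n} (hij : i ≠ j) :
    |(Aᵀ * A) i j| ≤ mutualCoherence A :=
  le_ciSup (f := fun p : {p : Fin n × Fin n // p.1 ≠ p.2} => |∑ r, A r p.1.1 * A r p.1.2|)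
    (Set.finite_range _).bddAbove ⟨(i, j), hij⟩

lemma gram_diag_eq_one (hA : ∀ j, l2norm (fun i => A i j) = 1) (j : Fin n) :
    (Aᵀ * A) j j = 1 := by
  rw [← one_pow 2, ← hA j, sq_l2norm]
  rfl

end MutualCoherence

section Lasso

lemma sq_l2norm_mulVec_sub_le_of_lasso {ι κ : Type*} [Fintype ι] [Fintype κ]
    (A : Matrix κ ι ℝ) {x xs : ι → ℝ} {z b : κ → ℝ} (hb : b = A *ᵥ x + z) {ε lam : ℝ}
    (hz : l2norm z ≤ ε) (hlam : 0 < lam)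
    (hmin : l1norm xs + 1 / (2 * lam) * l2norm (b - A *ᵥ xs) ^ 2 ≤
      l1norm x + 1 / (2 * lam) * l2norm (b - A *ᵥ x) ^ 2) :
    l2norm (A *ᵥ (xs - x)) ^ 2 ≤
      2 * lam * (l1norm x - l1norm xs) + 2 * ε * l2norm (A *ᵥ (xs - x)) := by
  have hbx : b - A *ᵥ x = z := by rw [hb]; abel
  have hbxs : b - A *ᵥ xs = z - A *ᵥ (xs - x) := by rw [hb, mulVec_sub]; abel
  rw [hbx, hbxs, sq_l2norm_sub] at hmin
  have hnoise : z ⬝ᵥ A *ᵥ (xs - x) ≤ ε * l2norm (A *ᵥ (xs - x)) :=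
    (dotProduct_le_l2norm_mul _ _).trans (by gcongr; exact l2norm_nonneg _)
  have hscaled : (2 * lam)⁻¹ * (l2norm (A *ᵥ (xs - x)) ^ 2 - 2 * (z ⬝ᵥ A *ᵥ (xs - x))) ≤
      l1norm x - l1norm xs := by
    rw [one_div] at hmin
    linarith
  rw [inv_mul_le_iff₀ (by positivity)] at hscaled
  linarith

variable {n : ℕ}

lemma l1norm_sub_l1norm_le (x xs xk : Fin n → ℝ) {T : Finset (Fin n)}
    (hxk : ∀ i ∉ T, xk i = 0) :
    l1norm x - l1norm xs ≤
      l1norm (restrict (xs - x) T) - l1norm (restrict (xs - x) Tᶜ) + 2 * l1norm (x - xk) := by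
  have hpt : ∀ i, |x i| - |xs i| ≤
      |restrict (xs - x) T i| - |restrict (xs - x) Tᶜ i| + 2 * |x i - xk i| := fun i => by
    by_cases hi : i ∈ T
    · simp only [restrict, hi, if_true, Finset.mem_compl, not_true_eq_false, if_false,
        abs_zero, sub_zero, Pi.sub_apply]
      linarith [abs_sub_abs_le_abs_sub (x i) (xs i), abs_sub_comm (x i) (xs i),
        abs_nonneg (x i - xk i)]
    · simp only [restrict, hi, if_false, Finset.mem_compl, not_false_eq_true, if_true,
        abs_zero, zero_sub, Pi.sub_apply, hxk i hi, sub_zero]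
      linarith [abs_sub (xs i) (x i)]
  simpa only [l1norm, ← sum_sub_distrib, mul_sum, ← sum_add_distrib, Pi.sub_apply]
    using sum_le_sum fun i _ => hpt i

end Lasso

theorem stmt_5_general {m n : ℕ} (A : Matrix (Fin m) (Fin n) ℝ)
    (hA : ∀ j, l2norm (fun i => A i j) = 1)
    (k : ℕ)
    (hμ : mutualCoherence A < 1 / (2 * (k : ℝ) - 1))
    (x : Fin n → ℝ) (z : Fin m → ℝ) (b : Fin m → ℝ) (hb : b = A.mulVec x + z)
    (ε lam : ℝ) (hz : l2norm z ≤ ε) (hlam : 0 < lam)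
    (xs : Fin n → ℝ)
    (hmin : ∀ u : Fin n → ℝ,
      l1norm xs + 1 / (2 * lam) * l2norm (b - A.mulVec xs) ^ 2 ≤
        l1norm u + 1 / (2 * lam) * l2norm (b - A.mulVec u) ^ 2)
    (xk : Fin n → ℝ) (hxk1 : sparse k xk) :
    l2norm (A.mulVec (xs - x)) ≤
      2 * lam / (Real.sqrt k * alpha1 k (mutualCoherence A) * lam + ε) * l1norm (x - xk)
        + 2 * (Real.sqrt k * alpha1 k (mutualCoherence A) * lam + ε) := by
  set μ := mutualCoherence A
  have hμ0 : 0 ≤ μ := mutualCoherence_nonneg A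
  have hμk := mul_lt_one_of_lt_one_div hμ0 hμ
  -- for `k = 0` the hypothesis reads `μ < -1`
  have hk : 1 ≤ k := Nat.one_le_iff_ne_zero.mpr fun h0 => by subst h0; norm_num at hμ; linarith
  set T := univ.filter fun i => xk i ≠ 0
  have hxkT : ∀ i ∉ T, xk i = 0 := by simp [T]
  have hfit := sq_l2norm_mulVec_sub_le_of_lasso A hb hz hlam (hmin x)
  have hsplit := l1norm_sub_l1norm_le x xs xk hxkT
  have hcone := l1norm_restrict_le_of_coherence (μ := μ) A
    (fun _ _ => abs_gram_le_mutualCoherence A) (gram_diag_eq_one A hA) hμ0 hμk (xs - x) (T := T)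
    hxk1
  set c := √k * alpha1 k μ * lam + ε with hc_def
  have hc : 0 < c := by
    have := alpha1_pos hk hμ0 hμk
    linarith [(l2norm_nonneg z).trans hz, show 0 < √k * alpha1 k μ * lam by positivity]
  have hquad : l2norm (A *ᵥ (xs - x)) ^ 2 ≤ 2 * c * l2norm (A *ᵥ (xs - x)) +
      2 * c * (2 * lam / c * l1norm (x - xk)) := by
    rw [show 2 * c * (2 * lam / c * l1norm (x - xk)) = 4 * lam * l1norm (x - xk) by
      field_simp; ring, hc_def]
    have h2lam : (0 : ℝ) ≤ 2 * lam := by positivity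
    linarith [mul_le_mul_of_nonneg_left hsplit h2lam, mul_le_mul_of_nonneg_left hcone h2lam]
  exact le_add_two_mul_of_sq_le hc (by have := l1norm_nonneg (x - xk); positivity) hquad

theorem stmt_5 {m n : ℕ} (A : Matrix (Fin m) (Fin n) ℝ)
    (hA : ∀ j, l2norm (fun i => A i j) = 1)
    (k : ℕ) (hk : 2 ≤ k)
    (hμ : mutualCoherence A < 1 / (2 * (k : ℝ) - 1))
    (x : Fin n → ℝ) (z : Fin m → ℝ) (b : Fin m → ℝ) (hb : b = A.mulVec x + z)
    (ε lam : ℝ) (hz : l2norm z ≤ ε) (hlam : 0 < lam)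
    (xs : Fin n → ℝ)
    (hmin : ∀ u : Fin n → ℝ,
      l1norm xs + 1 / (2 * lam) * l2norm (b - A.mulVec xs) ^ 2 ≤
        l1norm u + 1 / (2 * lam) * l2norm (b - A.mulVec u) ^ 2)
    (xk : Fin n → ℝ) (hxk1 : sparse k xk)
    (hxk2 : ∀ y : Fin n → ℝ, sparse k y → l2norm (xk - x) ≤ l2norm (y - x)) :
    l2norm (A.mulVec (xs - x)) ≤
      2 * lam / (Real.sqrt k * alpha1 k (mutualCoherence A) * lam + ε) * l1norm (x - xk)
        + 2 * (Real.sqrt k * alpha1 k (mutualCoherence A) * lam + ε) :=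
  stmt_5_general A hA k hμ x z b hb ε lam hz hlam xs hmin xk hxk1
end

section
/- Let A ∈ ℝ^{m×n} have columns of unit ℓ2-norm and mutual coherence μ, let k ≥ 2 be an integer with μ < 1/(2k−1), let b = Ax + z with ‖z‖₂ ≤ ε, let λ > 0, let x^♯ be a minimizer of u ↦ ‖u‖₁ + (1/(2λ))‖b − Au‖₂², and set h = x^♯ − x and E = supp(x_[k]). Then ‖h_E‖₂ ≤ ((2α₁(1 + √k·α₂)λ + 4α₂ε)/((1 − √k·α₂)(√k·α₁·λ + ε)))·‖x_{E^c}‖₁ + 2(α₁λ + α₂ε)(√k·α₁·λ + ε)/((1 − √k·α₂)λ), where α₁ = √(1+(k−1)μ)/(1−(k−1)μ) and α₂ = √k·μ/(1−(k−1)μ). -/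
lemma quadform_bound {n : ℕ} (E : Finset (Fin n)) (c : Fin n → ℝ) (G : Fin n → Fin n → ℝ)
    (μ : ℝ) (hdiag : ∀ i, G i i = 1) (hoff : ∀ i j, i ≠ j → |G i j| ≤ μ) :
    |(∑ i ∈ E, ∑ j ∈ E, c i * c j * G i j) - ∑ i ∈ E, (c i)^2| ≤
      μ * ((∑ i ∈ E, |c i|)^2 - ∑ i ∈ E, (c i)^2) := by
  have hsplit : (∑ i ∈ E, ∑ j ∈ E, c i * c j * G i j) - ∑ i ∈ E, (c i)^2
      = ∑ i ∈ E, ∑ j ∈ E.erase i, c i * c j * G i j := by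
    rw [← Finset.sum_sub_distrib]
    refine Finset.sum_congr rfl fun i hi => ?_
    rw [← Finset.add_sum_erase E _ hi, hdiag i]
    ring
  rw [hsplit]
  calc |∑ i ∈ E, ∑ j ∈ E.erase i, c i * c j * G i j|
      ≤ ∑ i ∈ E, ∑ j ∈ E.erase i, |c i| * |c j| * μ := by
        refine (Finset.abs_sum_le_sum_abs _ _).trans (Finset.sum_le_sum fun i _ => ?_)
        refine (Finset.abs_sum_le_sum_abs _ _).trans (Finset.sum_le_sum fun j hj => ?_)
        rw [abs_mul, abs_mul]
        have hij : i ≠ j := (Finset.ne_of_mem_erase hj).symm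
        have h0 : (0:ℝ) ≤ |c i| * |c j| := by positivity
        exact mul_le_mul_of_nonneg_left (hoff i j hij) h0
    _ = μ * ((∑ i ∈ E, |c i|)^2 - ∑ i ∈ E, (c i)^2) := by
        have step1 : ∀ i ∈ E, ∑ j ∈ E.erase i, |c i| * |c j| * μ
            = μ * (|c i| * ((∑ j ∈ E, |c j|) - |c i|)) := by
          intro i hi
          have : ∑ j ∈ E.erase i, |c i| * |c j| * μ
              = (∑ j ∈ E.erase i, |c j|) * (|c i| * μ) := by
            rw [Finset.sum_mul]
            exact Finset.sum_congr rfl fun j _ => by ring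
          rw [this, Finset.sum_erase_eq_sub hi]
          ring
        rw [Finset.sum_congr rfl step1, ← Finset.mul_sum]
        congr 1
        simp only [mul_sub]
        rw [Finset.sum_sub_distrib, ← Finset.sum_mul, sq]
        congr 1
        exact Finset.sum_congr rfl fun i _ => by rw [← sq_abs]; ring

lemma expand_sq {m n : ℕ} (A : Matrix (Fin m) (Fin n) ℝ) (E : Finset (Fin n)) (c : Fin n → ℝ) :
    ∑ r, (∑ i ∈ E, c i * A r i)^2
      = ∑ i ∈ E, ∑ j ∈ E, c i * c j * (∑ r, A r i * A r j) := by
  calc ∑ r, (∑ i ∈ E, c i * A r i)^2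
      = ∑ r, ∑ i ∈ E, ∑ j ∈ E, (c i * A r i) * (c j * A r j) := by
        refine Finset.sum_congr rfl fun r _ => by rw [sq, Finset.sum_mul_sum]
    _ = ∑ i ∈ E, ∑ r, ∑ j ∈ E, (c i * A r i) * (c j * A r j) := Finset.sum_comm
    _ = ∑ i ∈ E, ∑ j ∈ E, ∑ r, (c i * A r i) * (c j * A r j) := by
        exact Finset.sum_congr rfl fun i _ => Finset.sum_comm
    _ = ∑ i ∈ E, ∑ j ∈ E, c i * c j * ∑ r, A r i * A r j := by
        refine Finset.sum_congr rfl fun i _ => Finset.sum_congr rfl fun j _ => ?_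
        rw [Finset.mul_sum]
        exact Finset.sum_congr rfl fun r _ => by ring

lemma abs_dot_le_mutualCoherence {m n : ℕ} (A : Matrix (Fin m) (Fin n) ℝ) {i j : Fin n}
    (hij : i ≠ j) : |∑ r, A r i * A r j| ≤ mutualCoherence A := by
  have hbdd : BddAbove (Set.range fun p : {p : Fin n × Fin n // p.1 ≠ p.2} =>
      |∑ r, A r p.1.1 * A r p.1.2|) := Set.Finite.bddAbove (Set.finite_range _)
  exact le_ciSup hbdd ⟨(i, j), hij⟩

lemma mutualCoherence_nonneg_s10 {m n : ℕ} (A : Matrix (Fin m) (Fin n) ℝ) :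
    0 ≤ mutualCoherence A := by
  by_cases h : Nonempty {p : Fin n × Fin n // p.1 ≠ p.2}
  · obtain ⟨⟨⟨i, j⟩, hij⟩⟩ := h
    exact (abs_nonneg _).trans (abs_dot_le_mutualCoherence A hij)
  · rw [not_nonempty_iff] at h
    rw [mutualCoherence, Real.iSup_of_isEmpty]

lemma l2sq {ι : Type*} [Fintype ι] (v : ι → ℝ) : l2norm v ^ 2 = ∑ i, (v i)^2 :=
  Real.sq_sqrt (Finset.sum_nonneg fun i _ => sq_nonneg _)

lemma l2norm_restrict {n : ℕ} (v : Fin n → ℝ) (F : Finset (Fin n)) :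
    l2norm (restrict v F) = Real.sqrt (∑ i ∈ F, (v i)^2) := by
  rw [l2norm]
  congr 1
  have : ∀ i, (restrict v F i)^2 = if i ∈ F then (v i)^2 else 0 := by
    intro i; by_cases h : i ∈ F <;> simp [restrict, h]
  rw [Finset.sum_congr rfl fun i _ => this i, Finset.sum_ite_mem, Finset.univ_inter]

lemma l1norm_restrict {n : ℕ} (v : Fin n → ℝ) (F : Finset (Fin n)) :
    l1norm (restrict v F) = ∑ i ∈ F, |v i| := by
  rw [l1norm]
  have : ∀ i, |restrict v F i| = if i ∈ F then |v i| else 0 := by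
    intro i; by_cases h : i ∈ F <;> simp [restrict, h]
  rw [Finset.sum_congr rfl fun i _ => this i, Finset.sum_ite_mem, Finset.univ_inter]

lemma kkt {m n : ℕ} (A : Matrix (Fin m) (Fin n) ℝ)
    (hcol : ∀ j, ∑ r, (A r j)^2 = 1)
    (b : Fin m → ℝ) (lam : ℝ) (hlam : 0 < lam) (xs : Fin n → ℝ)
    (hmin : ∀ u : Fin n → ℝ,
      l1norm xs + 1 / (2 * lam) * l2norm (b - A.mulVec xs) ^ 2 ≤
        l1norm u + 1 / (2 * lam) * l2norm (b - A.mulVec u) ^ 2)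
    (i : Fin n) : |∑ r, A r i * (b r - A.mulVec xs r)| ≤ lam := by
  set c := ∑ r, A r i * (b r - A.mulVec xs r) with hc
  have hl : (0:ℝ) < 2 * lam := by linarith
  have key : ∀ t : ℝ, 0 ≤ 2*lam*|t| + t^2 - 2*t*c := by
    intro t
    set u : Fin n → ℝ := fun j => xs j + if j = i then t else 0 with hu
    have h1 : l1norm u ≤ l1norm xs + |t| := by
      have hterm : ∀ j, |u j| ≤ |xs j| + (if j = i then |t| else 0) := by
        intro j
        by_cases h : j = i <;> simp [hu, h, abs_add_le]
      calc l1norm u ≤ ∑ j, (|xs j| + if j = i then |t| else 0) :=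
            Finset.sum_le_sum fun j _ => hterm j
        _ = l1norm xs + |t| := by
            rw [Finset.sum_add_distrib]
            simp [l1norm, Finset.sum_ite_eq']
    have h2 : ∀ r, (b - A.mulVec u) r = (b r - A.mulVec xs r) - t * A r i := by
      intro r
      have : A.mulVec u r = A.mulVec xs r + A r i * t := by
        simp only [Matrix.mulVec, dotProduct, hu, mul_add, Finset.sum_add_distrib,
          mul_ite, mul_zero]
        simp [Finset.sum_ite_eq']
      simp only [Pi.sub_apply, this]; ring
    have h3 : l2norm (b - A.mulVec u) ^ 2 = l2norm (b - A.mulVec xs) ^ 2 - 2*t*c + t^2 := by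
      rw [l2sq, l2sq]
      simp only [Pi.sub_apply]
      calc ∑ r, (b r - A.mulVec u r)^2
          = ∑ r, ((b r - A.mulVec xs r)^2
              - 2*t*(A r i * (b r - A.mulVec xs r)) + t^2*(A r i)^2) := by
            refine Finset.sum_congr rfl fun r _ => ?_
            have := h2 r
            simp only [Pi.sub_apply] at this
            rw [this]; ring
        _ = (∑ r, (b r - A.mulVec xs r)^2) - 2*t*c + t^2 := by
            rw [Finset.sum_add_distrib, Finset.sum_sub_distrib, ← Finset.mul_sum,
              ← Finset.mul_sum, hcol i, hc]
            ring
    have h4 := hmin u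
    rw [h3] at h4
    have h6 : 0 ≤ |t| + 1/(2*lam) * (-(2*t*c) + t^2) := by nlinarith
    have h6' : -|t| ≤ (-(2*t*c) + t^2)/(2*lam) := by
      rw [div_eq_inv_mul, ← one_div]; linarith
    have h7 := (le_div_iff₀ hl).mp h6'
    nlinarith [h7]
  by_contra habs
  push_neg at habs
  rcases le_or_gt 0 c with hc0 | hc0
  · rw [abs_of_nonneg hc0] at habs
    have hk := key (c - lam)
    rw [abs_of_pos (by linarith)] at hk
    nlinarith [mul_pos (show (0:ℝ) < c - lam by linarith) (show (0:ℝ) < c - lam by linarith)]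
  · rw [abs_of_neg hc0] at habs
    have hk := key (c + lam)
    rw [abs_of_neg (by linarith)] at hk
    nlinarith [mul_pos (show (0:ℝ) < -(c + lam) by linarith) (show (0:ℝ) < -(c + lam) by linarith)]

set_option maxHeartbeats 1000000 in
theorem stmt_10 {m n : ℕ} (A : Matrix (Fin m) (Fin n) ℝ)
    (hA : ∀ j, l2norm (fun i => A i j) = 1)
    (k : ℕ) (hk : 2 ≤ k)
    (hμ : mutualCoherence A < 1 / (2 * (k : ℝ) - 1))
    (x : Fin n → ℝ) (z : Fin m → ℝ) (b : Fin m → ℝ) (hb : b = A.mulVec x + z)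
    (ε lam : ℝ) (hz : l2norm z ≤ ε) (hlam : 0 < lam)
    (xs : Fin n → ℝ)
    (hmin : ∀ u : Fin n → ℝ,
      l1norm xs + 1 / (2 * lam) * l2norm (b - A.mulVec xs) ^ 2 ≤
        l1norm u + 1 / (2 * lam) * l2norm (b - A.mulVec u) ^ 2)
    (xk : Fin n → ℝ) (hxk1 : sparse k xk)
    (hxk2 : ∀ y : Fin n → ℝ, sparse k y → l2norm (xk - x) ≤ l2norm (y - x))
    (E : Finset (Fin n)) (hE : E = Finset.univ.filter fun i => xk i ≠ 0) :
    l2norm (restrict (xs - x) E) ≤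
      (2 * alpha1 k (mutualCoherence A)
            * (1 + Real.sqrt k * alpha2 k (mutualCoherence A)) * lam
          + 4 * alpha2 k (mutualCoherence A) * ε)
        / ((1 - Real.sqrt k * alpha2 k (mutualCoherence A))
          * (Real.sqrt k * alpha1 k (mutualCoherence A) * lam + ε)) * l1norm (restrict x Eᶜ)
      + 2 * (alpha1 k (mutualCoherence A) * lam + alpha2 k (mutualCoherence A) * ε)
          * (Real.sqrt k * alpha1 k (mutualCoherence A) * lam + ε)
        / ((1 - Real.sqrt k * alpha2 k (mutualCoherence A)) * lam) := by
  set μ := mutualCoherence A with hμA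
  have hμ0 : 0 ≤ μ := mutualCoherence_nonneg_s10 A
  have hkR : (2:ℝ) ≤ (k:ℝ) := by exact_mod_cast hk
  have h2k : (0:ℝ) < 2*(k:ℝ) - 1 := by linarith
  have he2pos' : (2*(k:ℝ)-1) * μ < 1 := by
    have := (lt_div_iff₀ h2k).mp hμ
    linarith
  have hDpos : 0 < 1 - ((k:ℝ)-1)*μ := by nlinarith
  set s := Real.sqrt (k:ℝ) with hs
  have hss : s * s = (k:ℝ) := Real.mul_self_sqrt (by positivity)
  have hs1 : 1 ≤ s := by
    have := Real.sqrt_le_sqrt (show (1:ℝ) ≤ (k:ℝ) by linarith)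
    rwa [Real.sqrt_one] at this
  set q := Real.sqrt (1 + ((k:ℝ)-1)*μ) with hq
  have hq2 : q^2 = 1 + ((k:ℝ)-1)*μ := Real.sq_sqrt (by nlinarith)
  have hq1 : 1 ≤ q := by
    have := Real.sqrt_le_sqrt (show (1:ℝ) ≤ 1 + ((k:ℝ)-1)*μ by nlinarith)
    rwa [Real.sqrt_one] at this
  set D := 1 - ((k:ℝ)-1)*μ with hD
  have he2pos : 0 < D - s*s*μ := by rw [hss, hD]; linarith
  have hε0 : 0 ≤ ε := (Real.sqrt_nonneg _).trans hz
  have hcol : ∀ j, ∑ r, (A r j)^2 = 1 := by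
    intro j
    have := hA j
    rw [l2norm] at this
    exact Real.sqrt_eq_one.mp this
  have hGdiag : ∀ j : Fin n, ∑ r, A r j * A r j = 1 := by
    intro j
    rw [← hcol j]
    exact Finset.sum_congr rfl fun r _ => (sq (A r j)).symm
  have hGoff : ∀ i j : Fin n, i ≠ j → |∑ r, A r i * A r j| ≤ μ :=
    fun i j hij => abs_dot_le_mutualCoherence A hij
  have hEcard : E.card ≤ k := hE ▸ hxk1
  set h : Fin n → ℝ := fun i => xs i - x i with hh
  set Z : Fin n → ℝ := fun i => ∑ r, A r i * z r with hZdef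
  set R : Fin n → ℝ := fun i => ∑ r, A r i * (b r - A.mulVec xs r) with hRdef
  have hRb : ∀ i, |R i| ≤ lam := fun i => kkt A hcol b lam hlam xs hmin i
  have hZb : ∀ i, |Z i| ≤ ε := by
    intro i
    have hcs := Finset.sum_mul_sq_le_sq_mul_sq Finset.univ (fun r => A r i) z
    rw [hcol i] at hcs
    have h1 : |Z i| = Real.sqrt ((Z i)^2) := (Real.sqrt_sq_eq_abs _).symm
    rw [h1]
    calc Real.sqrt ((Z i)^2) ≤ Real.sqrt (∑ r, (z r)^2) := Real.sqrt_le_sqrt (by simpa using hcs)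
      _ ≤ ε := hz
  set Q := ∑ i ∈ E, (h i)^2 with hQdef
  set P := ∑ i ∈ E, |h i| with hPdef
  set T := ∑ i ∈ Eᶜ, |h i| with hTdef
  set X := ∑ i ∈ Eᶜ, |x i| with hXdef
  have hQ0 : 0 ≤ Q := Finset.sum_nonneg fun i _ => sq_nonneg _
  have hP0 : 0 ≤ P := Finset.sum_nonneg fun i _ => abs_nonneg _
  have hT0 : 0 ≤ T := Finset.sum_nonneg fun i _ => abs_nonneg _
  have hX0 : 0 ≤ X := Finset.sum_nonneg fun i _ => abs_nonneg _
  have hcardsq : ∀ c : Fin n → ℝ, (∑ i ∈ E, |c i|)^2 ≤ (k:ℝ) * ∑ i ∈ E, (c i)^2 := by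
    intro c
    have hcs := Finset.sum_mul_sq_le_sq_mul_sq E (fun _ => (1:ℝ)) (fun i => |c i|)
    simp only [one_mul, one_pow, sq_abs] at hcs
    have hQc0 : 0 ≤ ∑ i ∈ E, (c i)^2 := Finset.sum_nonneg fun i _ => sq_nonneg _
    calc (∑ i ∈ E, |c i|)^2 ≤ (∑ _i ∈ E, (1:ℝ)) * ∑ i ∈ E, (c i)^2 := hcs
      _ = (E.card : ℝ) * ∑ i ∈ E, (c i)^2 := by rw [Finset.sum_const, nsmul_eq_mul, mul_one]
      _ ≤ (k:ℝ) * ∑ i ∈ E, (c i)^2 := by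
          have : (E.card : ℝ) ≤ (k:ℝ) := by exact_mod_cast hEcard
          exact mul_le_mul_of_nonneg_right this hQc0
  have hPQ : P^2 ≤ (k:ℝ) * Q := hcardsq h
  have hueq : l2norm (restrict (xs - x) E) = Real.sqrt Q := by
    rw [l2norm_restrict]
    congr 1
  have hP_le : P ≤ s * Real.sqrt Q := by
    have h1 : P = Real.sqrt (P^2) := (Real.sqrt_sq hP0).symm
    rw [h1]
    calc Real.sqrt (P^2) ≤ Real.sqrt ((k:ℝ) * Q) := Real.sqrt_le_sqrt hPQ
      _ = s * Real.sqrt Q := by rw [Real.sqrt_mul (by positivity)]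
  have hW : ∀ i : Fin n, Z i - R i = ∑ j, (∑ r, A r i * A r j) * h j := by
    intro i
    have step1 : Z i - R i = ∑ r, A r i * (A.mulVec xs r - A.mulVec x r) := by
      rw [hZdef, hRdef, ← Finset.sum_sub_distrib]
      refine Finset.sum_congr rfl fun r _ => ?_
      rw [hb]
      simp only [Pi.add_apply]
      ring
    have hAv : ∀ r, A.mulVec xs r - A.mulVec x r = ∑ j, A r j * h j := by
      intro r
      simp only [Matrix.mulVec, dotProduct, ← Finset.sum_sub_distrib]
      exact Finset.sum_congr rfl fun j _ => by rw [hh]; ring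
    rw [step1]
    calc ∑ r, A r i * (A.mulVec xs r - A.mulVec x r)
        = ∑ r, ∑ j, A r i * (A r j * h j) := by
          refine Finset.sum_congr rfl fun r _ => ?_
          rw [hAv r, Finset.mul_sum]
      _ = ∑ j, ∑ r, A r i * (A r j * h j) := Finset.sum_comm
      _ = ∑ j, (∑ r, A r i * A r j) * h j := by
          refine Finset.sum_congr rfl fun j _ => ?_
          rw [Finset.sum_mul]
          exact Finset.sum_congr rfl fun r _ => by ring
  set S := ∑ i ∈ E, ∑ j ∈ E, h i * h j * (∑ r, A r i * A r j) with hSdef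
  have hSsplit : ∑ i ∈ E, h i * (Z i - R i)
      = S + ∑ i ∈ E, ∑ j ∈ Eᶜ, h i * h j * (∑ r, A r i * A r j) := by
    calc ∑ i ∈ E, h i * (Z i - R i)
        = ∑ i ∈ E, ∑ j, h i * h j * (∑ r, A r i * A r j) := by
          refine Finset.sum_congr rfl fun i _ => ?_
          rw [hW i, Finset.mul_sum]
          exact Finset.sum_congr rfl fun j _ => by ring
      _ = ∑ i ∈ E, ((∑ j ∈ E, h i * h j * (∑ r, A r i * A r j))
            + ∑ j ∈ Eᶜ, h i * h j * (∑ r, A r i * A r j)) := by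
          exact Finset.sum_congr rfl fun i _ => (Finset.sum_add_sum_compl E _).symm
      _ = S + ∑ i ∈ E, ∑ j ∈ Eᶜ, h i * h j * (∑ r, A r i * A r j) :=
          Finset.sum_add_distrib
  have hqf := quadform_bound E h (fun i j => ∑ r, A r i * A r j) μ hGdiag hGoff
  have hSlow : D * Q ≤ S := by
    have h1 := (abs_le.mp hqf).1
    have h2 : μ * (P^2 - Q) ≤ μ * ((k:ℝ)*Q - Q) :=
      mul_le_mul_of_nonneg_left (by linarith) hμ0
    have h3 : D * Q = Q - ((k:ℝ)*Q - Q) * μ := by rw [hD]; ring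
    nlinarith [h1, h2]
  set NN := ∑ i ∈ E, (Z i)^2 with hNNdef
  have hNN0 : 0 ≤ NN := Finset.sum_nonneg fun i _ => sq_nonneg _
  set N := Real.sqrt NN with hNdef
  have hN0 : 0 ≤ N := Real.sqrt_nonneg _
  have hB1 : ∑ i ∈ E, h i * Z i ≤ Real.sqrt Q * N := by
    have hcs := Finset.sum_mul_sq_le_sq_mul_sq E h Z
    calc ∑ i ∈ E, h i * Z i ≤ |∑ i ∈ E, h i * Z i| := le_abs_self _
      _ = Real.sqrt ((∑ i ∈ E, h i * Z i)^2) := (Real.sqrt_sq_eq_abs _).symm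
      _ ≤ Real.sqrt (Q * NN) := Real.sqrt_le_sqrt hcs
      _ = Real.sqrt Q * N := Real.sqrt_mul hQ0 _
  have hB2 : |∑ i ∈ E, h i * R i| ≤ P * lam := by
    refine (Finset.abs_sum_le_sum_abs _ _).trans ?_
    rw [hPdef, Finset.sum_mul]
    refine Finset.sum_le_sum fun i _ => ?_
    rw [abs_mul]
    exact mul_le_mul_of_nonneg_left (hRb i) (abs_nonneg _)
  have hB3 : |∑ i ∈ E, ∑ j ∈ Eᶜ, h i * h j * (∑ r, A r i * A r j)| ≤ μ * P * T := by
    calc |∑ i ∈ E, ∑ j ∈ Eᶜ, h i * h j * (∑ r, A r i * A r j)|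
        ≤ ∑ i ∈ E, ∑ j ∈ Eᶜ, |h i| * (|h j| * μ) := by
          refine (Finset.abs_sum_le_sum_abs _ _).trans (Finset.sum_le_sum fun i hi => ?_)
          refine (Finset.abs_sum_le_sum_abs _ _).trans (Finset.sum_le_sum fun j hj => ?_)
          have hij : i ≠ j := fun hij => (Finset.mem_compl.mp hj) (hij ▸ hi)
          rw [abs_mul, abs_mul, mul_assoc]
          refine mul_le_mul_of_nonneg_left ?_ (abs_nonneg _)
          exact mul_le_mul_of_nonneg_left (hGoff i j hij) (abs_nonneg _)
      _ = μ * P * T := by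
          rw [← Finset.sum_mul_sum, ← Finset.sum_mul]
          ring
  have hNq : N ≤ q * ε := by
    have hid : ∑ r, (∑ i ∈ E, Z i * A r i) * z r = NN := by
      calc ∑ r, (∑ i ∈ E, Z i * A r i) * z r
          = ∑ r, ∑ i ∈ E, Z i * (A r i * z r) := by
            refine Finset.sum_congr rfl fun r _ => ?_
            rw [Finset.sum_mul]
            exact Finset.sum_congr rfl fun i _ => by ring
        _ = ∑ i ∈ E, ∑ r, Z i * (A r i * z r) := Finset.sum_comm
        _ = ∑ i ∈ E, (Z i)^2 := by
            refine Finset.sum_congr rfl fun i _ => ?_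
            rw [← Finset.mul_sum, sq]
        _ = NN := rfl
    have hw2 : ∑ r, (∑ i ∈ E, Z i * A r i)^2 ≤ q^2 * NN := by
      rw [expand_sq A E Z]
      have hqfZ := quadform_bound E Z (fun i j => ∑ r, A r i * A r j) μ hGdiag hGoff
      have h1 := (abs_le.mp hqfZ).2
      have h2 : μ * ((∑ i ∈ E, |Z i|)^2 - NN) ≤ μ * ((k:ℝ)*NN - NN) :=
        mul_le_mul_of_nonneg_left (by linarith [hcardsq Z]) hμ0
      have h3 : q^2 * NN = NN + ((k:ℝ)*NN - NN)*μ := by rw [hq2]; ring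
      linarith
    have hz2 : ∑ r, (z r)^2 ≤ ε^2 := by
      rw [← l2sq]
      exact pow_le_pow_left₀ (Real.sqrt_nonneg _) hz 2
    have hcsr := Finset.sum_mul_sq_le_sq_mul_sq Finset.univ (fun r => ∑ i ∈ E, Z i * A r i) z
    rw [hid] at hcsr
    have hNN2 : NN^2 ≤ (q^2*NN)*ε^2 :=
      hcsr.trans (mul_le_mul hw2 hz2 (Finset.sum_nonneg fun r _ => sq_nonneg _)
        (mul_nonneg (sq_nonneg q) hNN0))
    have hNNle : NN ≤ q^2*ε^2 := by
      rcases eq_or_lt_of_le hNN0 with heq | hpos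
      · rw [← heq]
        exact mul_nonneg (sq_nonneg q) (sq_nonneg ε)
      · have h4 : NN*NN ≤ NN*(q^2*ε^2) := by
          calc NN*NN = NN^2 := (sq NN).symm
            _ ≤ (q^2*NN)*ε^2 := hNN2
            _ = NN*(q^2*ε^2) := by ring
        exact le_of_mul_le_mul_left h4 hpos
    calc N = Real.sqrt NN := rfl
      _ ≤ Real.sqrt (q^2*ε^2) := Real.sqrt_le_sqrt hNNle
      _ = q*ε := by
          rw [show q^2*ε^2 = (q*ε)^2 by ring]
          exact Real.sqrt_sq (mul_nonneg (by linarith) hε0)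
  have hSup : S ≤ Real.sqrt Q * N + P*lam + μ*P*T := by
    have h2 : ∑ i ∈ E, h i * (Z i - R i)
        = ∑ i ∈ E, h i * Z i - ∑ i ∈ E, h i * R i := by
      rw [← Finset.sum_sub_distrib]
      exact Finset.sum_congr rfl fun i _ => by ring
    have h3 := (abs_le.mp hB2).1
    have h4 := (abs_le.mp hB3).1
    have h5 : S = (∑ i ∈ E, h i * Z i - ∑ i ∈ E, h i * R i)
        - ∑ i ∈ E, ∑ j ∈ Eᶜ, h i * h j * (∑ r, A r i * A r j) := by
      rw [← h2]; linarith [hSsplit]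
    linarith [hB1]
  have hquad : D*Q ≤ Real.sqrt Q * N + s*Real.sqrt Q*lam + μ*(s*Real.sqrt Q)*T := by
    have hPl : P*lam ≤ s*Real.sqrt Q*lam := mul_le_mul_of_nonneg_right hP_le hlam.le
    have hPt : μ*P*T ≤ μ*(s*Real.sqrt Q)*T :=
      mul_le_mul_of_nonneg_right (mul_le_mul_of_nonneg_left hP_le hμ0) hT0
    linarith [hSlow, hSup]
  have hTb : T ≤ P + 2*X + 1/(2*lam)*ε^2 := by
    have hmx := hmin x
    have hbx : b - A.mulVec x = z := by rw [hb]; ext r; simp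
    rw [hbx] at hmx
    have h2l : (0:ℝ) < 1/(2*lam) := by positivity
    have hz2 : l2norm z ^2 ≤ ε^2 := pow_le_pow_left₀ (Real.sqrt_nonneg _) hz 2
    have hl1 : l1norm xs ≤ l1norm x + 1/(2*lam)*ε^2 := by
      have f1 : 1/(2*lam)*l2norm z^2 ≤ 1/(2*lam)*ε^2 :=
        mul_le_mul_of_nonneg_left hz2 h2l.le
      have f2 : 0 ≤ 1/(2*lam)*l2norm (b - A.mulVec xs)^2 :=
        mul_nonneg h2l.le (sq_nonneg _)
      linarith [hmx]
    have hE1 : ∑ i ∈ E, |x i| - P ≤ ∑ i ∈ E, |xs i| := by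
      rw [← Finset.sum_sub_distrib]
      refine Finset.sum_le_sum fun i _ => ?_
      have := abs_sub_abs_le_abs_sub (x i) (xs i)
      have habs : |x i - xs i| = |h i| := by rw [hh]; simp [abs_sub_comm]
      linarith
    have hE2 : T - X ≤ ∑ i ∈ Eᶜ, |xs i| := by
      rw [hTdef, hXdef, ← Finset.sum_sub_distrib]
      refine Finset.sum_le_sum fun i _ => ?_
      have h1 : |h i| ≤ |xs i| + |x i| := by rw [hh]; exact abs_sub (xs i) (x i)
      linarith
    have hsx : l1norm xs = ∑ i ∈ E, |xs i| + ∑ i ∈ Eᶜ, |xs i| :=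
      (Finset.sum_add_sum_compl E _).symm
    have hsx2 : l1norm x = ∑ i ∈ E, |x i| + X := (Finset.sum_add_sum_compl E _).symm
    linarith
  clear_value μ s q D h Z R Q P T X S NN N
  have hmainstep : Real.sqrt Q * (D - s*s*μ)
      ≤ q*ε + s*lam + 2*(s*μ)*X + s*μ*(1/(2*lam))*ε^2 := by
    have hsμ : 0 ≤ s*μ := mul_nonneg (by linarith) hμ0
    have hrhs0 : 0 ≤ q*ε + s*lam + 2*(s*μ)*X + s*μ*(1/(2*lam))*ε^2 := by
      have f1 : 0 ≤ q*ε := mul_nonneg (by linarith) hε0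
      have f2 : 0 < s*lam := mul_pos (by linarith) hlam
      have f3 : 0 ≤ s*μ*X := mul_nonneg hsμ hX0
      have f4 : 0 ≤ s*μ*(1/(2*lam))*ε^2 := by
        have : (0:ℝ) ≤ 1/(2*lam) := by positivity
        have := mul_nonneg hsμ this
        exact mul_nonneg this (sq_nonneg _)
      linarith
    rcases eq_or_lt_of_le (Real.sqrt_nonneg Q) with heq | hpos
    · rw [← heq]; simpa using hrhs0
    · have hQu : Real.sqrt Q * Real.sqrt Q = Q := Real.mul_self_sqrt hQ0
      have hDu : D * Real.sqrt Q ≤ N + s*lam + s*μ*T := by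
        refine le_of_mul_le_mul_left ?_ hpos
        calc Real.sqrt Q * (D * Real.sqrt Q) = D * (Real.sqrt Q * Real.sqrt Q) := by ring
          _ = D * Q := by rw [hQu]
          _ ≤ Real.sqrt Q * N + s*Real.sqrt Q*lam + μ*(s*Real.sqrt Q)*T := hquad
          _ = Real.sqrt Q * (N + s*lam + s*μ*T) := by ring
      have h5 : s*μ*T ≤ s*μ*(P + 2*X + 1/(2*lam)*ε^2) := mul_le_mul_of_nonneg_left hTb hsμ
      have h6 : s*μ*P ≤ s*μ*(s*Real.sqrt Q) := mul_le_mul_of_nonneg_left hP_le hsμ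
      have hgeq : Real.sqrt Q * (D - s*s*μ)
          = D * Real.sqrt Q - s*μ*(s*Real.sqrt Q) := by ring
      rw [hgeq]
      linarith [hDu, hNq, h5, h6]
  have hs0 : (0:ℝ) < s := by linarith
  have hq0 : (0:ℝ) < q := by linarith
  have hkm : 0 ≤ ((k:ℝ)-1)*μ := mul_nonneg (by linarith) hμ0
  have hDne : D ≠ 0 := ne_of_gt hDpos
  have hlamne : lam ≠ 0 := ne_of_gt hlam
  have he2ne : (D - s*s*μ) ≠ 0 := ne_of_gt he2pos
  have hτpos : 0 < s*q*lam + D*ε := by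
    have f1 : 0 < s*q*lam := mul_pos (mul_pos hs0 hq0) hlam
    have f2 : 0 ≤ D*ε := mul_nonneg hDpos.le hε0
    linarith
  have hτne : s*q*lam + D*ε ≠ 0 := ne_of_gt hτpos
  have hone : (1 - s*(s*μ/D)) = (D - s*s*μ)/D := by field_simp
  have hone_ne : (1 - s*(s*μ/D)) ≠ 0 := by
    rw [hone]
    exact ne_of_gt (div_pos he2pos hDpos)
  have hτ2pos : 0 < s*(q/D)*lam + ε := by
    have f1 : 0 < s*(q/D)*lam := mul_pos (mul_pos hs0 (div_pos hq0 hDpos)) hlam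
    linarith
  have hτ2ne : s*(q/D)*lam + ε ≠ 0 := ne_of_gt hτ2pos
  have hnum : q*ε + s*lam + 2*(s*μ)*X + s*μ*(1/(2*lam))*ε^2
      ≤ (2*q*(D+s*s*μ)*lam + 4*s*μ*D*ε)/(s*q*lam+D*ε)*X
        + 2*(q*lam+s*μ*ε)*(s*q*lam+D*ε)/(D*lam) := by
    have hXcoef : 2*(s*μ) ≤ (2*q*(D+s*s*μ)*lam + 4*s*μ*D*ε)/(s*q*lam+D*ε) := by
      rw [le_div_iff₀ hτpos]
      have f1 : 0 ≤ q*D*lam := mul_nonneg (mul_nonneg hq0.le hDpos.le) hlam.le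
      have f2 : 0 ≤ s*μ*D*ε :=
        mul_nonneg (mul_nonneg (mul_nonneg hs0.le hμ0) hDpos.le) hε0
      linarith [f1, f2]
    have hconst : q*ε + s*lam + s*μ*(1/(2*lam))*ε^2
        ≤ 2*(q*lam+s*μ*ε)*(s*q*lam+D*ε)/(D*lam) := by
      rw [le_div_iff₀ (mul_pos hDpos hlam)]
      have hc2 : lam*(1/(2*lam)) = 1/2 := by
        field_simp
      have hc1 : (q*ε + s*lam + s*μ*(1/(2*lam))*ε^2)*(D*lam)
          = q*ε*D*lam + s*D*lam^2 + s*μ*D*ε^2*(1/2) := by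
        calc (q*ε + s*lam + s*μ*(1/(2*lam))*ε^2)*(D*lam)
            = q*ε*D*lam + s*D*lam^2 + s*μ*D*ε^2*(lam*(1/(2*lam))) := by ring
          _ = q*ε*D*lam + s*D*lam^2 + s*μ*D*ε^2*(1/2) := by rw [hc2]
      rw [hc1]
      have g1 : 0 ≤ q*D*lam*ε :=
        mul_nonneg (mul_nonneg (mul_nonneg hq0.le hDpos.le) hlam.le) hε0
      have g2 : 0 ≤ (2*q^2 - D)*(s*lam^2) := by
        have f3 : 2*q^2 - D ≥ 1 := by rw [hq2, hD]; linarith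
        exact mul_nonneg (by linarith) (mul_nonneg hs0.le (sq_nonneg _))
      have g3 : 0 ≤ s*μ*D*ε^2 :=
        mul_nonneg (mul_nonneg (mul_nonneg hs0.le hμ0) hDpos.le) (sq_nonneg _)
      have g4 : 0 ≤ s*s*q*μ*lam*ε := by
        have := mul_nonneg (mul_nonneg (mul_nonneg (mul_nonneg
          (mul_nonneg hs0.le hs0.le) hq0.le) hμ0) hlam.le) hε0
        linarith [this]
      linarith [g1, g2, g3, g4]
    have hXt := mul_le_mul_of_nonneg_right hXcoef hX0
    linarith [hXt, hconst]
  have key : Real.sqrt Q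
      ≤ (2*q*(D+s*s*μ)*lam + 4*s*μ*D*ε)/((D-s*s*μ)*(s*q*lam+D*ε))*X
        + 2*(q*lam+s*μ*ε)*(s*q*lam+D*ε)/(D*(D-s*s*μ)*lam) := by
    calc Real.sqrt Q
        ≤ (q*ε + s*lam + 2*(s*μ)*X + s*μ*(1/(2*lam))*ε^2)/(D-s*s*μ) := by
          rw [le_div_iff₀ he2pos]
          linarith [hmainstep]
      _ ≤ ((2*q*(D+s*s*μ)*lam + 4*s*μ*D*ε)/(s*q*lam+D*ε)*X
            + 2*(q*lam+s*μ*ε)*(s*q*lam+D*ε)/(D*lam))/(D-s*s*μ) :=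
          (div_le_div_iff_of_pos_right he2pos).mpr hnum
      _ = (2*q*(D+s*s*μ)*lam + 4*s*μ*D*ε)/((D-s*s*μ)*(s*q*lam+D*ε))*X
            + 2*(q*lam+s*μ*ε)*(s*q*lam+D*ε)/(D*(D-s*s*μ)*lam) := by
          field_simp
  have hτ2eq : s*(q/D)*lam + ε = (s*q*lam + D*ε)/D := by
    field_simp
  rw [hueq, l1norm_restrict, ← hXdef]
  simp only [alpha1, alpha2]
  rw [← hq, ← hs, ← hD, hone, hτ2eq]
  refine key.trans (le_of_eq ?_)
  field_simp
end

section
/- Let A ∈ ℝ^{m×n} with n = l·d be partitioned into l consecutive column blocks A[1],…,A[l] ∈ ℝ^{m×d}, each of which is orthonormal, i.e., (A[i])ᵀA[i] = I_d for all i. Let μ_B = max_{1≤i<j≤l} ‖(A[i])ᵀA[j]‖₂ be the block coherence of A (spectral norm). Then for every integer k ≥ 1 and every block k-sparse vector y ∈ ℝⁿ, (1 − (k−1)d·μ_B)·‖y‖₂² ≤ ‖Ay‖₂² ≤ (1 + (k−1)d·μ_B)·‖y‖₂². -/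
open Matrix RealInnerProductSpace


/-- The `i`-th column block of a matrix whose columns are indexed by `Fin l × Fin d`. -/
def blk {m l d : ℕ} (A : Matrix (Fin m) (Fin l × Fin d) ℝ) (i : Fin l) :
    Matrix (Fin m) (Fin d) ℝ :=
  Matrix.of fun r j => A r (i, j)

/-- The spectral (ℓ2 operator) norm of a square matrix. -/
noncomputable def specNorm {d : ℕ} (M : Matrix (Fin d) (Fin d) ℝ) : ℝ :=
  ‖Matrix.toEuclideanCLM (𝕜 := ℝ) M‖

/-- The block coherence of `A`: the largest spectral norm of `(A[i])ᵀ A[j]` over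
pairs of distinct blocks. -/
noncomputable def blockCoherence {m l d : ℕ} (A : Matrix (Fin m) (Fin l × Fin d) ℝ) : ℝ :=
  ⨆ p : {p : Fin l × Fin l // p.1 ≠ p.2}, specNorm ((blk A p.1.1).transpose * blk A p.1.2)

/-- A vector is block `k`-sparse if at most `k` of its blocks are nonzero. -/
def blockSparse {l d : ℕ} (k : ℕ) (v : Fin l × Fin d → ℝ) : Prop :=
  (Finset.univ.filter fun i : Fin l => (fun j => v (i, j)) ≠ 0).card ≤ k

/-- The mixed ℓ2/ℓ1-norm `‖v‖_{2,1} = ∑ i, ‖v[i]‖₂`. -/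
noncomputable def l21norm {l d : ℕ} (v : Fin l × Fin d → ℝ) : ℝ :=
  ∑ i : Fin l, l2norm (fun j => v (i, j))

noncomputable def beta1 (k d : ℕ) (μB : ℝ) : ℝ :=
  Real.sqrt (1 + ((k : ℝ) - 1) * d * μB) / (1 - ((k : ℝ) - 1) * d * μB)

noncomputable def beta2 (k d : ℕ) (μB : ℝ) : ℝ :=
  Real.sqrt k * d * μB / (1 - ((k : ℝ) - 1) * d * μB)

lemma l2norm_sq {ι : Type*} [Fintype ι] (v : ι → ℝ) :
    l2norm v ^ 2 = ∑ i, (v i) ^ 2 :=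
  Real.sq_sqrt (Finset.sum_nonneg fun _ _ => sq_nonneg _)

lemma specNorm_bound {d : ℕ} (M : Matrix (Fin d) (Fin d) ℝ) (x z : Fin d → ℝ) :
    |x ⬝ᵥ M.mulVec z| ≤ specNorm M * l2norm x * l2norm z := by
  set x' : EuclideanSpace ℝ (Fin d) := (WithLp.equiv 2 _).symm x with hx'
  set z' : EuclideanSpace ℝ (Fin d) := (WithLp.equiv 2 _).symm z with hz'
  have hnx : ‖x'‖ = l2norm x := by
    rw [EuclideanSpace.norm_eq]
    congr 1
    exact Finset.sum_congr rfl fun i _ => by rw [Real.norm_eq_abs, sq_abs]; rfl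
  have hnz : ‖z'‖ = l2norm z := by
    rw [EuclideanSpace.norm_eq]
    congr 1
    exact Finset.sum_congr rfl fun i _ => by rw [Real.norm_eq_abs, sq_abs]; rfl
  have hkey : x ⬝ᵥ M.mulVec z = (inner ℝ x' ((Matrix.toEuclideanCLM (𝕜 := ℝ) M) z') : ℝ) := by
    rw [hz', WithLp.equiv_symm_apply, Matrix.toEuclideanCLM_toLp]
    simp [dotProduct, PiLp.inner_apply, RCLike.inner_apply, starRingEnd_apply,
      Matrix.toLin'_apply, Matrix.mulVec, hx']
    exact Finset.sum_congr rfl fun i _ => mul_comm _ _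
  rw [hkey]
  calc |(inner ℝ x' ((Matrix.toEuclideanCLM (𝕜 := ℝ) M) z') : ℝ)|
      ≤ ‖x'‖ * ‖(Matrix.toEuclideanCLM (𝕜 := ℝ) M) z'‖ := abs_real_inner_le_norm _ _
    _ ≤ ‖x'‖ * (‖Matrix.toEuclideanCLM (𝕜 := ℝ) M‖ * ‖z'‖) := by
        gcongr; exact ContinuousLinearMap.le_opNorm _ _
    _ = _ := by rw [hnx, hnz]; unfold specNorm; ring

theorem stmt_17 {m l d : ℕ} (A : Matrix (Fin m) (Fin l × Fin d) ℝ)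
    (hA : ∀ i, (blk A i).transpose * blk A i = 1)
    (k : ℕ) (hk : 1 ≤ k) (y : Fin l × Fin d → ℝ) (hy : blockSparse k y) :
    (1 - ((k : ℝ) - 1) * d * blockCoherence A) * l2norm y ^ 2 ≤ l2norm (A.mulVec y) ^ 2 ∧
      l2norm (A.mulVec y) ^ 2 ≤ (1 + ((k : ℝ) - 1) * d * blockCoherence A) * l2norm y ^ 2 := by
  classical
  have hμ0 : 0 ≤ blockCoherence A := Real.iSup_nonneg fun p => norm_nonneg _
  have hμle : ∀ i i' : Fin l, i ≠ i' →
      specNorm ((blk A i).transpose * blk A i') ≤ blockCoherence A := by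
    intro i i' h
    exact le_ciSup (f := fun p : {p : Fin l × Fin l // p.1 ≠ p.2} =>
        specNorm ((blk A p.1.1).transpose * blk A p.1.2))
      (Set.Finite.bddAbove (Set.finite_range _)) ⟨(i, i'), h⟩
  set μ := blockCoherence A with hμdef
  set yb : Fin l → Fin d → ℝ := fun i j => y (i, j) with hybdef
  set nb : Fin l → ℝ := fun i => l2norm (yb i) with hnbdef
  set B : Fin l → Fin l → ℝ :=
    fun i i' => yb i ⬝ᵥ ((blk A i).transpose * blk A i').mulVec (yb i') with hBdef
  set f : Fin l → Fin m → ℝ := fun i => (blk A i).mulVec (yb i) with hfdef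
  have hnb0 : ∀ i, 0 ≤ nb i := fun i => Real.sqrt_nonneg _
  have hBd : ∀ i i', B i i' = f i ⬝ᵥ f i' := by
    intro i i'
    rw [hBdef, hfdef]
    simp only
    rw [← Matrix.mulVec_mulVec, Matrix.dotProduct_mulVec, Matrix.vecMul_transpose]
  have hAy : ∀ r, A.mulVec y r = ∑ i, f i r := by
    intro r
    simp only [hfdef, Matrix.mulVec, dotProduct, blk, Matrix.of_apply, hybdef]
    rw [Fintype.sum_prod_type]
  -- expansion of the quadratic form
  have hexp : l2norm (A.mulVec y) ^ 2 = ∑ i, ∑ i', B i i' := by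
    rw [l2norm_sq]
    calc ∑ r, (A.mulVec y r) ^ 2
        = ∑ r, ∑ i, ∑ i', f i r * f i' r := by
          refine Finset.sum_congr rfl fun r _ => ?_
          rw [hAy r, sq, Finset.sum_mul_sum]
      _ = ∑ i, ∑ i', ∑ r, f i r * f i' r := by
          rw [Finset.sum_comm]
          exact Finset.sum_congr rfl fun i _ => Finset.sum_comm
      _ = ∑ i, ∑ i', B i i' := by
          refine Finset.sum_congr rfl fun i _ => Finset.sum_congr rfl fun i' _ => ?_
          rw [hBd]; rfl
  -- diagonal terms
  have hdiag : ∀ i, B i i = nb i ^ 2 := by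
    intro i
    show yb i ⬝ᵥ ((blk A i).transpose * blk A i).mulVec (yb i) = l2norm (yb i) ^ 2
    rw [hA i, Matrix.one_mulVec, l2norm_sq]
    simp [dotProduct, sq]
  -- off-diagonal bound
  have hoff : ∀ i i', i ≠ i' → |B i i'| ≤ μ * (nb i * nb i') := by
    intro i i' h
    calc |B i i'| ≤ specNorm ((blk A i).transpose * blk A i') * l2norm (yb i) * l2norm (yb i') :=
          specNorm_bound _ _ _
      _ ≤ μ * (nb i * nb i') := by
          rw [← mul_assoc]
          exact mul_le_mul_of_nonneg_right
            (mul_le_mul_of_nonneg_right (hμle i i' h) (hnb0 i)) (hnb0 i')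
  -- the support
  set S : Finset (Fin l) := Finset.univ.filter fun i : Fin l => (fun j => y (i, j)) ≠ 0 with hSdef
  have hScard : S.card ≤ k := hy
  have hnbS : ∀ i ∉ S, nb i = 0 := by
    intro i hi
    have : yb i = 0 := by
      by_contra h
      exact hi (Finset.mem_filter.mpr ⟨Finset.mem_univ _, h⟩)
    rw [hnbdef]
    simp [this, l2norm]
  have hNy : l2norm y ^ 2 = ∑ i, nb i ^ 2 := by
    rw [l2norm_sq, Fintype.sum_prod_type]
    exact Finset.sum_congr rfl fun i _ => (l2norm_sq (yb i)).symm
  set N : ℝ := ∑ i, nb i ^ 2 with hNdef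
  have hN0 : 0 ≤ N := Finset.sum_nonneg fun i _ => sq_nonneg _
  -- Cauchy-Schwarz / sparsity
  have hCS : (∑ i, nb i) ^ 2 ≤ (k : ℝ) * N := by
    have h1 : ∑ i, nb i = ∑ i ∈ S, nb i := by
      refine (Finset.sum_subset (Finset.subset_univ S) ?_).symm
      intro i _ hi; exact hnbS i hi
    rw [h1]
    calc (∑ i ∈ S, nb i) ^ 2 ≤ (S.card : ℝ) * ∑ i ∈ S, nb i ^ 2 := by
          exact_mod_cast sq_sum_le_card_mul_sum_sq (s := S) (f := nb)
      _ ≤ (k : ℝ) * N := by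
          refine mul_le_mul (by exact_mod_cast hScard)
            (Finset.sum_le_sum_of_subset_of_nonneg (Finset.subset_univ S)
              fun i _ _ => sq_nonneg _) (Finset.sum_nonneg fun i _ => sq_nonneg _)
            (by positivity)
  -- off-diagonal sum
  set R : ℝ := ∑ i, ∑ i' ∈ Finset.univ.erase i, B i i' with hRdef
  have hsplit : l2norm (A.mulVec y) ^ 2 = N + R := by
    rw [hexp, hNdef, hRdef, ← Finset.sum_add_distrib]
    refine Finset.sum_congr rfl fun i _ => ?_
    rw [← hdiag i, Finset.add_sum_erase _ _ (Finset.mem_univ i)]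
  have hRabs : |R| ≤ ((k : ℝ) - 1) * μ * N := by
    calc |R| ≤ ∑ i, |∑ i' ∈ Finset.univ.erase i, B i i'| :=
          Finset.abs_sum_le_sum_abs _ _
      _ ≤ ∑ i, ∑ i' ∈ Finset.univ.erase i, |B i i'| :=
          Finset.sum_le_sum fun i _ => Finset.abs_sum_le_sum_abs _ _
      _ ≤ ∑ i, ∑ i' ∈ Finset.univ.erase i, μ * (nb i * nb i') := by
          refine Finset.sum_le_sum fun i _ => Finset.sum_le_sum fun i' hi' => ?_
          exact hoff i i' (Ne.symm (Finset.ne_of_mem_erase hi'))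
      _ = μ * ((∑ i, nb i) ^ 2 - N) := by
          simp only [← Finset.mul_sum]
          congr 1
          rw [hNdef, sq, Finset.sum_mul, ← Finset.sum_sub_distrib]
          refine Finset.sum_congr rfl fun i _ => ?_
          rw [Finset.sum_erase_eq_sub (Finset.mem_univ i)]
          ring
      _ ≤ μ * ((k : ℝ) * N - N) := by
          refine mul_le_mul_of_nonneg_left (by linarith [hCS]) hμ0
      _ = ((k : ℝ) - 1) * μ * N := by ring
  -- d ≥ 1 case handled via N = 0 when d = 0
  have hfinal : ((k : ℝ) - 1) * μ * N ≤ ((k : ℝ) - 1) * d * μ * N := by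
    rcases Nat.eq_zero_or_pos d with hd | hd
    · have hNz : N = 0 := by
        rw [hNdef]
        refine Finset.sum_eq_zero fun i _ => ?_
        have : nb i = 0 := by
          show l2norm (yb i) = 0
          subst hd
          simp [l2norm]
        rw [this]; ring
      rw [hNz]; simp
    · have hk1 : (1 : ℝ) ≤ (k : ℝ) := by exact_mod_cast hk
      have hd1 : (1 : ℝ) ≤ (d : ℝ) := by exact_mod_cast hd
      nlinarith [mul_nonneg (mul_nonneg (sub_nonneg.mpr hk1) hμ0) hN0]
  have habs := abs_le.mp hRabs
  constructor
  · rw [hsplit, hNy]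
    nlinarith [habs.1, hfinal]
  · rw [hsplit, hNy]
    nlinarith [habs.2, hfinal]
end
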